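/- Suppose r̄ ≥ (3/2) r_D, τ₃ κ² r_D < 4/9, τ₄ κ² r_D² < 1/3, and E[‖D F^{-1} ξ‖⁴ 1_S] ≤ C₄² 𝔞_D² for some C₄ > 0. Define R_Q = E[‖Q F^{-1} ξ‖² 1_S] and R_{Q,2} = E[‖Q φ‖² 1_S]. If a constant α_{Q,1} < 1 satisfies ‖Q F^{-1} D‖ · (τ₃/2) · C₄ · 𝔞_D ≤ α_{Q,1} √R_Q, then R_Q (1 − α_{Q,1})² ≤ R_{Q,2} ≤ R_Q (1 + α_{Q,1})². -/

import Mathlib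

/-!
Put `X = Q F⁻¹ ξ` and `Y = Q F⁻¹ ∇T(F⁻¹ ξ)`, so that `R_Q` and `R_{Q,2}` are the squared
`L²(P|_S)` norms of `X` and `X + Y`, and Minkowski's inequality gives
`|‖X + Y‖₂ - ‖X‖₂| ≤ ‖Y‖₂`. Testing `D⁻¹ ∇T(u)` against all vectors and using the bound on
`∇³f(υ*)` gives `‖D⁻¹ ∇T(u)‖ ≤ (τ₃/2) ‖D u‖²`, hence pointwise
`‖Y‖ ≤ ‖Q F⁻¹ D‖ (τ₃/2) ‖D F⁻¹ ξ‖²`, and the fourth-moment bound turns this into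
`‖Y‖₂ ≤ ‖Q F⁻¹ D‖ (τ₃/2) C₄ 𝔞_D ≤ α_{Q,1} √R_Q`. Squaring the two-sided bound on `‖X + Y‖₂`
gives the claim.
-/

open MeasureTheory RealInnerProductSpace

/-- Application of a matrix to a vector in Euclidean space. -/
noncomputable def mApp {p q : ℕ} (M : Matrix (Fin q) (Fin p) ℝ)
    (v : EuclideanSpace ℝ (Fin p)) : EuclideanSpace ℝ (Fin q) :=
  Matrix.toEuclideanLin M v

/-- Operator norm of (the Euclidean linear map induced by) a matrix. -/
noncomputable def mopNorm {p q : ℕ} (M : Matrix (Fin q) (Fin p) ℝ) : ℝ :=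
  ‖(LinearMap.toContinuousLinearMap (Matrix.toEuclideanLin M))‖

section MatrixApplication

variable {p q r : ℕ}

lemma mApp_mul (M : Matrix (Fin r) (Fin q) ℝ) (N : Matrix (Fin q) (Fin p) ℝ)
    (v : EuclideanSpace ℝ (Fin p)) : mApp (M * N) v = mApp M (mApp N v) := by
  simp [mApp]

lemma mApp_one (v : EuclideanSpace ℝ (Fin p)) : mApp 1 v = v := by
  simp [mApp]

lemma mApp_add (M : Matrix (Fin q) (Fin p) ℝ) (u v : EuclideanSpace ℝ (Fin p)) :
    mApp M (u + v) = mApp M u + mApp M v :=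
  map_add _ u v

lemma norm_mApp_le (M : Matrix (Fin q) (Fin p) ℝ) (v : EuclideanSpace ℝ (Fin p)) :
    ‖mApp M v‖ ≤ mopNorm M * ‖v‖ :=
  (LinearMap.toContinuousLinearMap (Matrix.toEuclideanLin M)).le_opNorm v

@[fun_prop]
lemma continuous_mApp (M : Matrix (Fin q) (Fin p) ℝ) : Continuous (mApp M) :=
  (LinearMap.toContinuousLinearMap (Matrix.toEuclideanLin M)).continuous

lemma MeasureTheory.MemLp.mApp {Ω : Type*} [MeasurableSpace Ω] {μ : Measure Ω} {s : ENNReal}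
    {g : Ω → EuclideanSpace ℝ (Fin p)} (hg : MemLp g s μ) (M : Matrix (Fin q) (Fin p) ℝ) :
    MemLp (fun ω => _root_.mApp M (g ω)) s μ :=
  (LinearMap.toContinuousLinearMap (Matrix.toEuclideanLin M)).comp_memLp' hg

lemma inner_mApp_left_of_isHermitian {D : Matrix (Fin p) (Fin p) ℝ} (hD : D.IsHermitian)
    (x y : EuclideanSpace ℝ (Fin p)) : ⟪mApp D x, y⟫ = ⟪x, mApp D y⟫ :=
  Matrix.isSymmetric_toEuclideanLin_iff.2 hD x y

lemma mApp_mApp_inv {D : Matrix (Fin p) (Fin p) ℝ} (hD : IsUnit D.det)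
    (v : EuclideanSpace ℝ (Fin p)) : mApp D (mApp D⁻¹ v) = v := by
  rw [← mApp_mul, Matrix.mul_nonsing_inv D hD, mApp_one]

lemma norm_mApp_inv_le_of_abs_inner_le {D : Matrix (Fin p) (Fin p) ℝ} (hD : D.IsHermitian)
    (hdet : IsUnit D.det) {v : EuclideanSpace ℝ (Fin p)} {K : ℝ} (hK : 0 ≤ K)
    (h : ∀ w, |⟪v, w⟫| ≤ K * ‖mApp D w‖) : ‖mApp D⁻¹ v‖ ≤ K := by
  set y := mApp D⁻¹ v
  have hy : ‖y‖ ^ 2 ≤ K * ‖y‖ := calc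
    ‖y‖ ^ 2 = ⟪v, mApp D⁻¹ y⟫ := by
      rw [← real_inner_self_eq_norm_sq, inner_mApp_left_of_isHermitian hD.inv]
    _ ≤ K * ‖y‖ := by
      simpa only [mApp_mApp_inv hdet] using (le_abs_self _).trans (h (mApp D⁻¹ y))
  nlinarith [norm_nonneg y]

lemma norm_mApp_le_mopNorm_mul_mul_norm_mApp_inv {D : Matrix (Fin p) (Fin p) ℝ}
    (hdet : IsUnit D.det) (M : Matrix (Fin q) (Fin p) ℝ) (v : EuclideanSpace ℝ (Fin p)) :
    ‖mApp M v‖ ≤ mopNorm (M * D) * ‖mApp D⁻¹ v‖ := by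
  simpa only [mApp_mul, mApp_mApp_inv hdet] using norm_mApp_le (M * D) (mApp D⁻¹ v)

lemma norm_mApp_le_of_inner_eq_half {D : Matrix (Fin p) (Fin p) ℝ} (hD : D.PosDef)
    (M : Matrix (Fin q) (Fin p) ℝ) {T : EuclideanSpace ℝ (Fin p) → EuclideanSpace ℝ (Fin p)}
    {Φ : (Fin 3 → EuclideanSpace ℝ (Fin p)) → ℝ} {τ : ℝ} (hτ : 0 ≤ τ)
    (hT : ∀ u w, ⟪T u, w⟫ = 1 / 2 * Φ ![u, u, w])
    (hΦ : ∀ u w, |Φ ![u, u, w]| ≤ τ * ‖mApp D u‖ ^ 2 * ‖mApp D w‖) (z : EuclideanSpace ℝ (Fin p)) :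
    ‖mApp M (T z)‖ ≤ mopNorm (M * D) * (τ / 2) * ‖mApp D z‖ ^ 2 := by
  have hdet : IsUnit D.det := (Matrix.isUnit_iff_isUnit_det D).1 hD.isUnit
  have hTz : ‖mApp D⁻¹ (T z)‖ ≤ τ / 2 * ‖mApp D z‖ ^ 2 := by
    refine norm_mApp_inv_le_of_abs_inner_le hD.isHermitian hdet (by positivity) fun w => ?_
    rw [hT, abs_mul, abs_of_pos one_half_pos]
    linarith [hΦ z w]
  calc ‖mApp M (T z)‖ ≤ mopNorm (M * D) * ‖mApp D⁻¹ (T z)‖ :=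
        norm_mApp_le_mopNorm_mul_mul_norm_mApp_inv hdet M (T z)
    _ ≤ mopNorm (M * D) * (τ / 2 * ‖mApp D z‖ ^ 2) := by gcongr; exact norm_nonneg _
    _ = mopNorm (M * D) * (τ / 2) * ‖mApp D z‖ ^ 2 := by ring

end MatrixApplication

lemma continuous_of_forall_continuous_inner {X E : Type*} [TopologicalSpace X]
    [NormedAddCommGroup E] [InnerProductSpace ℝ E] [FiniteDimensional ℝ E] {g : X → E}
    (h : ∀ w, Continuous fun x => ⟪g x, w⟫) : Continuous g := by
  let b := stdOrthonormalBasis ℝ E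
  have hg : g = fun x => ∑ i, ⟪b i, g x⟫ • b i := funext fun x => (b.sum_repr' (g x)).symm
  rw [hg]
  refine continuous_finsetSum _ fun i _ => ?_
  exact ((h (b i)).congr fun x => real_inner_comm _ _).smul continuous_const

lemma sq_mul_one_sub_sq_le_sq_and_sq_le {s t α : ℝ} (hs : 0 ≤ s) (ht : 0 ≤ t) (hα : α < 1)
    (h : |t - s| ≤ α * s) : s ^ 2 * (1 - α) ^ 2 ≤ t ^ 2 ∧ t ^ 2 ≤ s ^ 2 * (1 + α) ^ 2 := by
  obtain ⟨hlo, hhi⟩ := abs_sub_le_iff.1 h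
  constructor
  · rw [← mul_pow]
    exact pow_le_pow_left₀ (mul_nonneg hs (by linarith)) (by linarith) 2
  · rw [← mul_pow]
    exact pow_le_pow_left₀ ht (by linarith) 2

namespace MeasureTheory

variable {α E : Type*} {m : MeasurableSpace α} {μ : Measure α} [NormedAddCommGroup E]

lemma sq_lpNorm_two {f : α → E} (hf : AEStronglyMeasurable f μ) :
    lpNorm f 2 μ ^ 2 = ∫ x, ‖f x‖ ^ 2 ∂μ := by
  rw [lpNorm_eq_integral_norm_rpow_toReal two_ne_zero ENNReal.ofNat_ne_top hf,
    ← Real.rpow_natCast, ← Real.rpow_mul (integral_nonneg fun _ => by positivity)]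
  norm_num

lemma sq_lpNorm_two_norm_sq {f : α → E} (hf : AEStronglyMeasurable f μ) :
    lpNorm (fun x => ‖f x‖ ^ 2) 2 μ ^ 2 = ∫ x, ‖f x‖ ^ 4 ∂μ := by
  rw [sq_lpNorm_two (by fun_prop)]
  congr 1 with x
  rw [Real.norm_of_nonneg (by positivity), ← pow_mul]

lemma abs_lpNorm_add_sub_lpNorm_le {p : ENNReal} {f g : α → E} (hf : MemLp f p μ)
    (hg : MemLp g p μ) (hp : 1 ≤ p) :
    |lpNorm (f + g) p μ - lpNorm f p μ| ≤ lpNorm g p μ :=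
  abs_sub_le_iff.2 ⟨by linarith [lpNorm_add_le hf hp (g := g)],
    by linarith [lpNorm_le_add_lpNorm_add hg hp (f := f)]⟩

lemma integral_norm_add_sq_bounds {X Y : α → E} (hX : MemLp X 2 μ) (hY : MemLp Y 2 μ) {a : ℝ}
    (ha : a < 1) (hY_le : lpNorm Y 2 μ ≤ a * √(∫ x, ‖X x‖ ^ 2 ∂μ)) :
    (∫ x, ‖X x‖ ^ 2 ∂μ) * (1 - a) ^ 2 ≤ ∫ x, ‖X x + Y x‖ ^ 2 ∂μ ∧
      ∫ x, ‖X x + Y x‖ ^ 2 ∂μ ≤ (∫ x, ‖X x‖ ^ 2 ∂μ) * (1 + a) ^ 2 := by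
  have hXY : ∫ x, ‖X x + Y x‖ ^ 2 ∂μ = lpNorm (X + Y) 2 μ ^ 2 :=
    (sq_lpNorm_two (hX.add hY).1).symm
  rw [← sq_lpNorm_two hX.1, Real.sqrt_sq lpNorm_nonneg] at hY_le
  rw [hXY, ← sq_lpNorm_two hX.1]
  exact sq_mul_one_sub_sq_le_sq_and_sq_le lpNorm_nonneg lpNorm_nonneg ha
    ((abs_lpNorm_add_sub_lpNorm_le hX hY one_le_two).trans hY_le)

end MeasureTheory

theorem risk_equivalence_general
    {p : ℕ}
    (f : EuclideanSpace ℝ (Fin p) → ℝ)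
    (υs : EuclideanSpace ℝ (Fin p))
    (F : Matrix (Fin p) (Fin p) ℝ)
    (D : Matrix (Fin p) (Fin p) ℝ) (hD : D.PosDef)
    (τ3 rb : ℝ) (hτ3 : 0 < τ3) (hrb : 0 < rb)
    (hT3 : ∀ υ : EuclideanSpace ℝ (Fin p), ‖mApp D (υ - υs)‖ ≤ rb →
      ∀ u w : EuclideanSpace ℝ (Fin p),
        |iteratedFDeriv ℝ 3 f υ ![u, u, w]| ≤ τ3 * ‖mApp D u‖ ^ 2 * ‖mApp D w‖)
    (gT : EuclideanSpace ℝ (Fin p) → EuclideanSpace ℝ (Fin p))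
    (hgT : ∀ u w : EuclideanSpace ℝ (Fin p),
      ⟪gT u, w⟫ = 1 / 2 * iteratedFDeriv ℝ 3 f υs ![u, u, w])
    (rD : ℝ)
    {Ω : Type} [MeasurableSpace Ω] (P : Measure Ω) [IsProbabilityMeasure P]
    (ξ : Ω → EuclideanSpace ℝ (Fin p)) (hξ2 : MemLp ξ 2 P)
    (S : Set Ω) (hS : MeasurableSet S)
    (hξD : ∀ ω ∈ S, ‖mApp D (mApp F⁻¹ (ξ ω))‖ ≤ rD)
    {q : ℕ} (Q : Matrix (Fin q) (Fin p) ℝ)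
    (aD : ℝ) (haD : aD = ∫ ω, ‖mApp D (mApp F⁻¹ (ξ ω))‖ ^ 2 ∂P)
    (C4 : ℝ) (hC4 : 0 < C4)
    (hmom4 : ∫ ω in S, ‖mApp D (mApp F⁻¹ (ξ ω))‖ ^ 4 ∂P ≤ C4 ^ 2 * aD ^ 2)
    (RQ RQ2 : ℝ)
    (hRQ : RQ = ∫ ω in S, ‖mApp Q (mApp F⁻¹ (ξ ω))‖ ^ 2 ∂P)
    (hRQ2 : RQ2 = ∫ ω in S, ‖mApp Q (mApp F⁻¹ (ξ ω) + mApp F⁻¹ (gT (mApp F⁻¹ (ξ ω))))‖ ^ 2 ∂P)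
    (αQ1 : ℝ) (hα1 : αQ1 < 1)
    (hαbound : mopNorm (Q * F⁻¹ * D) * (τ3 / 2) * C4 * aD ≤ αQ1 * Real.sqrt RQ) :
    RQ * (1 - αQ1) ^ 2 ≤ RQ2 ∧ RQ2 ≤ RQ * (1 + αQ1) ^ 2 := by
  set μ := P.restrict S
  set c := mopNorm (Q * F⁻¹ * D) * (τ3 / 2)
  have hc : 0 ≤ c := mul_nonneg (norm_nonneg _) (by positivity)
  have hgT_cont : Continuous gT :=
    continuous_of_forall_continuous_inner fun w => by simp_rw [hgT]; fun_prop
  have hgT_le (z) : ‖mApp Q (mApp F⁻¹ (gT z))‖ ≤ c * ‖mApp D z‖ ^ 2 := by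
    simpa only [mApp_mul] using norm_mApp_le_of_inner_eq_half hD (Q * F⁻¹) hτ3.le hgT
      (hT3 υs (by simp [mApp, hrb.le])) z
  set u := fun ω => mApp F⁻¹ (ξ ω)
  set V := fun ω => ‖mApp D (u ω)‖ ^ 2
  have hu : MemLp u 2 μ := (hξ2.restrict S).mApp F⁻¹
  have hu_meas : AEStronglyMeasurable u μ := hu.1
  have hV : MemLp V 2 μ := .of_bound (by fun_prop) (rD ^ 2) <|
    ae_restrict_of_forall_mem hS fun ω hω => by
      rw [Real.norm_of_nonneg (by positivity)]
      exact pow_le_pow_left₀ (norm_nonneg _) (hξD ω hω) 2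
  have hY : MemLp (fun ω => mApp Q (mApp F⁻¹ (gT (u ω)))) 2 μ :=
    (hV.const_smul c).of_le (by fun_prop) <| ae_of_all _ fun ω => (hgT_le _).trans (le_abs_self _)
  have hV_le : lpNorm V 2 μ ≤ C4 * aD := by
    have haD0 : 0 ≤ aD := haD ▸ integral_nonneg fun _ => by positivity
    refine le_of_pow_le_pow_left₀ two_ne_zero (by positivity) ?_
    rw [sq_lpNorm_two_norm_sq (by fun_prop), mul_pow]
    exact hmom4
  subst hRQ hRQ2
  simp only [mApp_add]
  refine integral_norm_add_sq_bounds (hu.mApp Q) hY hα1 ?_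
  calc _ ≤ lpNorm (c • V) 2 μ := lpNorm_mono_real (hV.const_smul c) fun ω => hgT_le _
    _ = c * lpNorm V 2 μ := by rw [lpNorm_const_smul, Real.nnnorm_of_nonneg hc]; rfl
    _ ≤ c * (C4 * aD) := by gcongr
    _ ≤ _ := by rw [← mul_assoc]; exact hαbound

theorem risk_equivalence
    {p : ℕ} (hp : 1 ≤ p)
    (f : EuclideanSpace ℝ (Fin p) → ℝ)
    (hconv : ConvexOn ℝ Set.univ f)
    (hf : ContDiff ℝ 4 f)
    (υs : EuclideanSpace ℝ (Fin p))
    (hgrad : gradient f υs = 0)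
    (F : Matrix (Fin p) (Fin p) ℝ) (hF : F.PosDef)
    (hFdef : ∀ u w : EuclideanSpace ℝ (Fin p),
      iteratedFDeriv ℝ 2 f υs ![u, w] = ⟪mApp F u, w⟫)
    (D : Matrix (Fin p) (Fin p) ℝ) (hD : D.PosDef)
    (κ : ℝ) (hκ : 0 < κ)
    (hLoew : (κ ^ 2 • F - D * D).PosSemidef)
    (τ3 τ4 rb : ℝ) (hτ3 : 0 < τ3) (hτ4 : 0 < τ4) (hrb : 0 < rb)
    (hT3 : ∀ υ : EuclideanSpace ℝ (Fin p), ‖mApp D (υ - υs)‖ ≤ rb →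
      ∀ u w : EuclideanSpace ℝ (Fin p),
        |iteratedFDeriv ℝ 3 f υ ![u, u, w]| ≤ τ3 * ‖mApp D u‖ ^ 2 * ‖mApp D w‖)
    (hT4 : ∀ υ : EuclideanSpace ℝ (Fin p), ‖mApp D (υ - υs)‖ ≤ rb →
      ∀ u w : EuclideanSpace ℝ (Fin p),
        |iteratedFDeriv ℝ 4 f υ ![u, u, u, w]| ≤ τ4 * ‖mApp D u‖ ^ 3 * ‖mApp D w‖)
    (gT : EuclideanSpace ℝ (Fin p) → EuclideanSpace ℝ (Fin p))
    (hgT : ∀ u w : EuclideanSpace ℝ (Fin p),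
      ⟪gT u, w⟫ = 1 / 2 * iteratedFDeriv ℝ 3 f υs ![u, u, w])
    (rD : ℝ) (hrD : 0 < rD)
    {Ω : Type} [MeasurableSpace Ω] (P : Measure Ω) [IsProbabilityMeasure P]
    (ξ : Ω → EuclideanSpace ℝ (Fin p)) (hξm : Measurable ξ) (hξ2 : MemLp ξ 2 P)
    (S : Set Ω) (hS : MeasurableSet S)
    (hξD : ∀ ω ∈ S, ‖mApp D (mApp F⁻¹ (ξ ω))‖ ≤ rD)
    {q : ℕ} (Q : Matrix (Fin q) (Fin p) ℝ)
    (aD : ℝ) (haD : aD = ∫ ω, ‖mApp D (mApp F⁻¹ (ξ ω))‖ ^ 2 ∂P)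
    (h1 : rb ≥ 3 / 2 * rD) (h2 : τ3 * κ ^ 2 * rD < 4 / 9)
    (h3 : τ4 * κ ^ 2 * rD ^ 2 < 1 / 3)
    (C4 : ℝ) (hC4 : 0 < C4)
    (hmom4 : ∫ ω in S, ‖mApp D (mApp F⁻¹ (ξ ω))‖ ^ 4 ∂P ≤ C4 ^ 2 * aD ^ 2)
    (RQ RQ2 : ℝ)
    (hRQ : RQ = ∫ ω in S, ‖mApp Q (mApp F⁻¹ (ξ ω))‖ ^ 2 ∂P)
    (hRQ2 : RQ2 = ∫ ω in S, ‖mApp Q (mApp F⁻¹ (ξ ω) + mApp F⁻¹ (gT (mApp F⁻¹ (ξ ω))))‖ ^ 2 ∂P)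
    (αQ1 : ℝ) (hα1 : αQ1 < 1)
    (hαbound : mopNorm (Q * F⁻¹ * D) * (τ3 / 2) * C4 * aD ≤ αQ1 * Real.sqrt RQ) :
    RQ * (1 - αQ1) ^ 2 ≤ RQ2 ∧ RQ2 ≤ RQ * (1 + αQ1) ^ 2 :=
  risk_equivalence_general f υs F D hD τ3 rb hτ3 hrb hT3 gT hgT rD P ξ hξ2 S hS hξD Q aD haD C4 hC4
    hmom4 RQ RQ2 hRQ hRQ2 αQ1 hα1 hαbound
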